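/- Let n ≥ 1, a ∈ ℝⁿ, M ∈ ℝ^{n×n}, let P and Σ be symmetric positive semidefinite n×n matrices, and let λ ≥ 0 with Σ ⪰ λI. Then √(aᵀ(MΣMᵀ + P)a) − √(aᵀ(λ·MMᵀ + P)a) ≤ ‖Mᵀa‖₂ · (√(λ_max(Σ)) − √λ). -/

import Mathlib

open Matrix

noncomputable def eucNorm {n : ℕ} (v : Fin n → ℝ) : ℝ := Real.sqrt (∑ i, v i ^ 2)

noncomputable def lamMax {n : ℕ} (M : Matrix (Fin n) (Fin n) ℝ) : ℝ :=
  sSup {r : ℝ | ∃ v : Fin n → ℝ, eucNorm v = 1 ∧ r = v ⬝ᵥ M.mulVec v}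

noncomputable def lamMin {n : ℕ} (M : Matrix (Fin n) (Fin n) ℝ) : ℝ :=
  sInf {r : ℝ | ∃ v : Fin n → ℝ, eucNorm v = 1 ∧ r = v ⬝ᵥ M.mulVec v}

noncomputable def specNorm {n p : ℕ} (M : Matrix (Fin n) (Fin p) ℝ) : ℝ :=
  Real.sqrt (lamMax (Mᵀ * M))

structure Policy (n m T : ℕ) (A : Matrix (Fin n) (Fin n) ℝ) (B : Matrix (Fin n) (Fin m) ℝ) where
  xbar : ℕ → Fin n → ℝ
  ubar : ℕ → Fin m → ℝ
  K : ℕ → Matrix (Fin m) (Fin n) ℝ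
  xbar_dyn : ∀ k, k < T → xbar (k + 1) = A.mulVec (xbar k) + B.mulVec (ubar k)

namespace Policy

variable {n m T : ℕ} {A : Matrix (Fin n) (Fin n) ℝ} {B : Matrix (Fin n) (Fin m) ℝ}

noncomputable def mean (C : Policy n m T A B) (mu0 : Fin n → ℝ) : ℕ → Fin n → ℝ
  | 0 => mu0
  | k + 1 => A.mulVec (C.mean mu0 k) + B.mulVec (C.ubar k)
      + B.mulVec ((C.K k).mulVec (C.mean mu0 k - C.xbar k))

noncomputable def cov (C : Policy n m T A B) (D : Matrix (Fin n) (Fin n) ℝ)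
    (Sig0 : Matrix (Fin n) (Fin n) ℝ) : ℕ → Matrix (Fin n) (Fin n) ℝ
  | 0 => Sig0
  | k + 1 => (A + B * C.K k) * C.cov D Sig0 k * (A + B * C.K k)ᵀ + D * Dᵀ

noncomputable def clProd (C : Policy n m T A B) : ℕ → Matrix (Fin n) (Fin n) ℝ
  | 0 => 1
  | k + 1 => (A + B * C.K k) * C.clProd k

end Policy

def stateOK {n m T : ℕ} {A : Matrix (Fin n) (Fin n) ℝ} {B : Matrix (Fin n) (Fin m) ℝ}
    (c : ℝ) {I : ℕ} (ax : Fin I → Fin n → ℝ) (bx : Fin I → ℝ)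
    (D : Matrix (Fin n) (Fin n) ℝ) (C : Policy n m T A B)
    (mu0 : Fin n → ℝ) (Sig0 : Matrix (Fin n) (Fin n) ℝ) : Prop :=
  ∀ i : Fin I, ∀ k ≤ T,
    ax i ⬝ᵥ C.mean mu0 k + c * Real.sqrt (ax i ⬝ᵥ (C.cov D Sig0 k).mulVec (ax i)) ≤ bx i

def ctrlOK {n m T : ℕ} {A : Matrix (Fin n) (Fin n) ℝ} {B : Matrix (Fin n) (Fin m) ℝ}
    (c : ℝ) {J : ℕ} (au : Fin J → Fin m → ℝ) (bu : Fin J → ℝ)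
    (D : Matrix (Fin n) (Fin n) ℝ) (C : Policy n m T A B)
    (mu0 : Fin n → ℝ) (Sig0 : Matrix (Fin n) (Fin n) ℝ) : Prop :=
  ∀ j : Fin J, ∀ k < T,
    au j ⬝ᵥ (C.ubar k + (C.K k).mulVec (C.mean mu0 k - C.xbar k))
      + c * Real.sqrt (au j ⬝ᵥ (C.K k * C.cov D Sig0 k * (C.K k)ᵀ).mulVec (au j)) ≤ bu j

def inBall {n : ℕ} (c : ℝ) (muHat : Fin n → ℝ) (rHat : ℝ)
    (mu : Fin n → ℝ) (Sig : Matrix (Fin n) (Fin n) ℝ) : Prop :=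
  eucNorm (mu - muHat) + c * Real.sqrt (lamMax Sig) ≤ rHat

def BRS {n m : ℕ} (T : ℕ) (A : Matrix (Fin n) (Fin n) ℝ) (B : Matrix (Fin n) (Fin m) ℝ)
    (D : Matrix (Fin n) (Fin n) ℝ) (c : ℝ) {I J : ℕ}
    (ax : Fin I → Fin n → ℝ) (bx : Fin I → ℝ) (au : Fin J → Fin m → ℝ) (bu : Fin J → ℝ)
    (S : Set ((Fin n → ℝ) × Matrix (Fin n) (Fin n) ℝ)) :
    Set ((Fin n → ℝ) × Matrix (Fin n) (Fin n) ℝ) :=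
  {p | p.2.PosSemidef ∧ ∃ C : Policy n m T A B, C.xbar 0 = p.1 ∧
    stateOK c ax bx D C p.1 p.2 ∧ ctrlOK c au bu D C p.1 p.2 ∧
    (C.mean p.1 T, C.cov D p.2 T) ∈ S}

def Proj {n : ℕ} (S : Set ((Fin n → ℝ) × Matrix (Fin n) (Fin n) ℝ)) : Set (Fin n → ℝ) :=
  {mu | ∃ Sig, (mu, Sig) ∈ S}

/-!
With `w = Mᵀa` and `q = aᵀPa ≥ 0` the two radicands are `wᵀΣw + q` and `λ‖w‖² + q`, and
`λ‖w‖² ≤ wᵀΣw` because `Σ ⪰ λI`. By concavity of `√`, adding `q` to both can only shrink the gap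
between their square roots, and the Rayleigh bound `wᵀΣw ≤ λ_max(Σ)‖w‖²` bounds the remaining
gap `√(wᵀΣw) - √λ‖w‖`.
-/

lemma Real.sqrt_add_sub_sqrt_add_le {x y q : ℝ} (hy : 0 ≤ y) (hyx : y ≤ x) (hq : 0 ≤ q) :
    √(x + q) - √(y + q) ≤ √x - √y := by
  have hx : 0 ≤ x := hy.trans hyx
  have hcross : √(x + q) * √y ≤ √x * √(y + q) := by
    rw [← Real.sqrt_mul (by linarith), ← Real.sqrt_mul hx]
    exact Real.sqrt_le_sqrt (by nlinarith)
  have hsum : √(x + q) + √y ≤ √x + √(y + q) := by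
    refine (pow_le_pow_iff_left₀ (by positivity) (by positivity) two_ne_zero).1 ?_
    rw [add_sq, add_sq, Real.sq_sqrt (by linarith), Real.sq_sqrt hy, Real.sq_sqrt hx,
      Real.sq_sqrt (by linarith)]
    linarith
  linarith

lemma eucNorm_eq_norm {n : ℕ} (v : Fin n → ℝ) : eucNorm v = ‖WithLp.toLp 2 v‖ := by
  simp [eucNorm, EuclideanSpace.norm_eq]

lemma dotProduct_self_eq_eucNorm_sq {n : ℕ} (v : Fin n → ℝ) : v ⬝ᵥ v = eucNorm v ^ 2 := by
  rw [eucNorm, Real.sq_sqrt (Finset.sum_nonneg fun i _ => sq_nonneg _)]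
  simp [dotProduct, sq]

lemma bddAbove_dotProduct_mulVec_of_eucNorm_eq_one {n : ℕ} (M : Matrix (Fin n) (Fin n) ℝ) :
    BddAbove {r : ℝ | ∃ v : Fin n → ℝ, eucNorm v = 1 ∧ r = v ⬝ᵥ M *ᵥ v} := by
  have hset : {r : ℝ | ∃ v : Fin n → ℝ, eucNorm v = 1 ∧ r = v ⬝ᵥ M *ᵥ v} =
      (fun x : EuclideanSpace ℝ (Fin n) => x.ofLp ⬝ᵥ M *ᵥ x.ofLp) '' Metric.sphere 0 1 := by
    ext r
    simp only [Set.mem_ofPred_eq, Set.mem_image, mem_sphere_zero_iff_norm, eucNorm_eq_norm]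
    exact ⟨fun ⟨v, hv, hr⟩ => ⟨WithLp.toLp 2 v, hv, hr.symm⟩,
      fun ⟨x, hx, hr⟩ => ⟨x.ofLp, hx, hr.symm⟩⟩
  rw [hset]
  exact (isCompact_sphere 0 1).bddAbove_image (by fun_prop)

lemma dotProduct_mulVec_le_lamMax_mul_eucNorm_sq {n : ℕ} (M : Matrix (Fin n) (Fin n) ℝ)
    (w : Fin n → ℝ) :
    w ⬝ᵥ M *ᵥ w ≤ lamMax M * eucNorm w ^ 2 := by
  rcases eq_or_ne w 0 with rfl | hw
  · simp [eucNorm]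
  have he : 0 < eucNorm w := by
    rw [eucNorm_eq_norm]; exact norm_pos_iff.2 (by simpa using hw)
  have hunit : eucNorm ((eucNorm w)⁻¹ • w) = 1 := by
    rw [eucNorm_eq_norm, WithLp.toLp_smul, norm_smul, ← eucNorm_eq_norm, Real.norm_eq_abs,
      abs_inv, abs_of_pos he, inv_mul_cancel₀ he.ne']
  have hle := le_csSup (bddAbove_dotProduct_mulVec_of_eucNorm_eq_one M) ⟨_, hunit, rfl⟩
  rw [mulVec_smul, dotProduct_smul, smul_dotProduct, smul_eq_mul, smul_eq_mul,
    inv_mul_le_iff₀ he, inv_mul_le_iff₀ he] at hle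
  exact hle.trans_eq (by unfold lamMax; ring)

lemma dotProduct_mulVec_le_of_posSemidef_sub {ι : Type*} [Fintype ι] {A B : Matrix ι ι ℝ}
    (h : (A - B).PosSemidef) (w : ι → ℝ) : w ⬝ᵥ B *ᵥ w ≤ w ⬝ᵥ A *ᵥ w := by
  simpa [sub_mulVec] using h.dotProduct_mulVec_nonneg w

lemma dotProduct_mul_mul_transpose_mulVec {m ι R : Type*} [Fintype m] [Fintype ι] [CommSemiring R]
    (M : Matrix m ι R) (S : Matrix ι ι R) (a : m → R) :
    a ⬝ᵥ (M * S * Mᵀ) *ᵥ a = (Mᵀ *ᵥ a) ⬝ᵥ S *ᵥ (Mᵀ *ᵥ a) := by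
  rw [← mulVec_mulVec, ← mulVec_mulVec, dotProduct_mulVec, mulVec_transpose, dotProduct_mulVec,
    vecMul_vecMul]

theorem sqrt_quadform_diff_le_general (n : ℕ) (a : Fin n → ℝ)
    (M : Matrix (Fin n) (Fin n) ℝ)
    (P Sig : Matrix (Fin n) (Fin n) ℝ) (hP : P.PosSemidef)
    (lam : ℝ) (hlam : 0 ≤ lam)
    (hdom : (Sig - lam • (1 : Matrix (Fin n) (Fin n) ℝ)).PosSemidef) :
    Real.sqrt (a ⬝ᵥ (M * Sig * Mᵀ + P).mulVec a)
      - Real.sqrt (a ⬝ᵥ (lam • (M * Mᵀ) + P).mulVec a)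
      ≤ eucNorm (Mᵀ.mulVec a) * (Real.sqrt (lamMax Sig) - Real.sqrt lam) := by
  set w := Mᵀ *ᵥ a
  have hq : 0 ≤ a ⬝ᵥ P *ᵥ a := by simpa using hP.dotProduct_mulVec_nonneg a
  have hSig_form : a ⬝ᵥ (M * Sig * Mᵀ + P) *ᵥ a = w ⬝ᵥ Sig *ᵥ w + a ⬝ᵥ P *ᵥ a := by
    rw [add_mulVec, dotProduct_add, dotProduct_mul_mul_transpose_mulVec]
  have hlam_form : a ⬝ᵥ (lam • (M * Mᵀ) + P) *ᵥ a = lam * eucNorm w ^ 2 + a ⬝ᵥ P *ᵥ a := by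
    have hMMt : a ⬝ᵥ (M * Mᵀ) *ᵥ a = w ⬝ᵥ w := by
      simpa using dotProduct_mul_mul_transpose_mulVec M 1 a
    rw [add_mulVec, dotProduct_add, smul_mulVec, dotProduct_smul, smul_eq_mul, hMMt,
      dotProduct_self_eq_eucNorm_sq]
  have hlam_le : lam * eucNorm w ^ 2 ≤ w ⬝ᵥ Sig *ᵥ w := by
    simpa [smul_mulVec, dotProduct_self_eq_eucNorm_sq] using
      dotProduct_mulVec_le_of_posSemidef_sub hdom w
  have hw : 0 ≤ eucNorm w := Real.sqrt_nonneg _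
  rw [hSig_form, hlam_form]
  calc _ ≤ √(w ⬝ᵥ Sig *ᵥ w) - √(lam * eucNorm w ^ 2) :=
        Real.sqrt_add_sub_sqrt_add_le (by positivity) hlam_le hq
    _ ≤ √(lamMax Sig * eucNorm w ^ 2) - √(lam * eucNorm w ^ 2) := by
        gcongr; exact dotProduct_mulVec_le_lamMax_mul_eucNorm_sq Sig w
    _ = eucNorm w * (√(lamMax Sig) - √lam) := by
        rw [Real.sqrt_mul' _ (sq_nonneg _), Real.sqrt_mul' _ (sq_nonneg _), Real.sqrt_sq hw]
        ring

/-- quadratic-form square-root perturbation bound. -/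
theorem sqrt_quadform_diff_le (n : ℕ) (hn : 1 ≤ n) (a : Fin n → ℝ)
    (M : Matrix (Fin n) (Fin n) ℝ)
    (P Sig : Matrix (Fin n) (Fin n) ℝ) (hP : P.PosSemidef) (hSig : Sig.PosSemidef)
    (lam : ℝ) (hlam : 0 ≤ lam)
    (hdom : (Sig - lam • (1 : Matrix (Fin n) (Fin n) ℝ)).PosSemidef) :
    Real.sqrt (a ⬝ᵥ (M * Sig * Mᵀ + P).mulVec a)
      - Real.sqrt (a ⬝ᵥ (lam • (M * Mᵀ) + P).mulVec a)
      ≤ eucNorm (Mᵀ.mulVec a) * (Real.sqrt (lamMax Sig) - Real.sqrt lam) :=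
  sqrt_quadform_diff_le_general n a M P Sig hP lam hlam hdom
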